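/- arXiv:2405.10479 — 2 statements merged into one kernel-verified Lean document; each statement's English description precedes it below -/
import Mathlib

section
/- Let $Q_T = \Omega \times (0,T)$ with $\Omega \subset \mathbb{R}^n$ bounded, and let $\varphi_\lambda(x,t) = \exp[2\lambda(x_1^2 - (t - T/2)^2)]$. Then for every $\lambda > 0$ and every $s \in L_2(Q_T)$, $\int_{Q_T} \left( \int_{T/2}^{t} s(x,\tau)\, d\tau \right)^2 \varphi_\lambda(x,t)\, dx\, dt \le \frac{C_2}{\lambda} \int_{Q_T} s(x,t)^2 \varphi_\lambda(x,t)\, dx\, dt$, where $C_2 > 0$ is a constant independent of $\lambda$ and $s$. -/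
open MeasureTheory Real

section CarlemanHelpers

open Set

private lemma carleman_abs_le (x : ℝ) : |x| ≤ 1 + x ^ 2 := by
  nlinarith [sq_nonneg (|x| - 1), sq_abs x, abs_nonneg x]

private lemma carleman_int_of_sq {μ : Measure ℝ} [IsFiniteMeasure μ] {f : ℝ → ℝ}
    (hm : AEStronglyMeasurable f μ) (h2 : Integrable (fun t => f t ^ 2) μ) :
    Integrable f μ :=
  Integrable.mono' ((integrable_const (1:ℝ)).add h2) hm
    (Filter.Eventually.of_forall fun t => by
      simpa [Real.norm_eq_abs] using carleman_abs_le (f t))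

private lemma carleman_sq_integral_le {μ : Measure ℝ} [IsFiniteMeasure μ] {f : ℝ → ℝ}
    (hm : AEStronglyMeasurable f μ) (h2 : Integrable (fun t => f t ^ 2) μ) :
    (∫ t, f t ∂μ) ^ 2 ≤ (μ Set.univ).toReal * ∫ t, f t ^ 2 ∂μ := by
  have hpq : Real.HolderConjugate 2 2 := Real.HolderConjugate.two_two
  have hf2 : MemLp (fun t => |f t|) (ENNReal.ofReal 2) μ := by
    rw [show ENNReal.ofReal 2 = 2 by norm_num]
    refine (memLp_two_iff_integrable_sq hm.norm).mpr ?_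
    exact h2.congr (Filter.Eventually.of_forall fun t => (sq_abs (f t)).symm)
  have hone : MemLp (fun _ : ℝ => (1:ℝ)) (ENNReal.ofReal 2) μ := memLp_const 1
  have hold := integral_mul_le_Lp_mul_Lq_of_nonneg hpq
    (Filter.Eventually.of_forall fun t => abs_nonneg (f t))
    (Filter.Eventually.of_forall fun _ => zero_le_one) hf2 hone
  simp only [mul_one, Real.rpow_two, one_pow, sq_abs] at hold
  -- hold : ∫ |f| ≤ (∫ f^2) ^ (1/2 : ℝ) * (∫ 1) ^ (1/2 : ℝ)
  have hE1 : ∫ (_ : ℝ), (1:ℝ) ∂μ = (μ Set.univ).toReal := by simp [Measure.real]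
  rw [hE1] at hold
  set a := ∫ t, f t ^ 2 ∂μ with ha
  set m := (μ Set.univ).toReal with hmm
  have ha0 : 0 ≤ a := integral_nonneg fun t => sq_nonneg _
  have hm0 : 0 ≤ m := ENNReal.toReal_nonneg
  have h1 : (∫ t, f t ∂μ) ^ 2 ≤ (∫ t, |f t| ∂μ) ^ 2 := by
    have : |∫ t, f t ∂μ| ≤ ∫ t, |f t| ∂μ := by
      simpa [Real.norm_eq_abs] using norm_integral_le_integral_norm (f := f) (μ := μ)
    have h0 : 0 ≤ |∫ t, f t ∂μ| := abs_nonneg _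
    calc (∫ t, f t ∂μ) ^ 2 = |∫ t, f t ∂μ| ^ 2 := (sq_abs _).symm
      _ ≤ (∫ t, |f t| ∂μ) ^ 2 := by
          apply pow_le_pow_left₀ h0 this
  have h2' : (∫ t, |f t| ∂μ) ^ 2 ≤ (a ^ ((1:ℝ)/2) * m ^ ((1:ℝ)/2)) ^ 2 := by
    apply pow_le_pow_left₀ (integral_nonneg fun t => abs_nonneg _) hold
  have h3 : (a ^ ((1:ℝ)/2) * m ^ ((1:ℝ)/2)) ^ 2 = m * a := by
    rw [mul_pow, ← Real.rpow_natCast (a ^ ((1:ℝ)/2)) 2, ← Real.rpow_natCast (m ^ ((1:ℝ)/2)) 2,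
      ← Real.rpow_mul ha0, ← Real.rpow_mul hm0]
    norm_num; ring
  linarith [h1.trans (h2'.trans_eq h3)]


private lemma carleman_primInt {lam : ℝ} (hlam : 0 < lam) (c α β : ℝ) (hαβ : α ≤ β) :
    ∫ t in Set.Ioc α β, ((t - c) * rexp (-(2*lam)*(t-c)^2))
      = (rexp (-(2*lam)*(α-c)^2) - rexp (-(2*lam)*(β-c)^2)) / (4*lam) := by
  rw [← intervalIntegral.integral_of_le hαβ]
  have hderiv : ∀ t ∈ Set.uIcc α β,
      HasDerivAt (fun u => -(rexp (-(2*lam)*(u-c)^2)) / (4*lam))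
        ((t - c) * rexp (-(2*lam)*(t-c)^2)) t := by
    intro t _
    have h1 : HasDerivAt (fun u : ℝ => -(2*lam)*(u-c)^2)
        (-(2*lam) * (2 * (t - c))) t := by
      have := (((hasDerivAt_id t).sub_const c).pow 2).const_mul (-(2*lam))
      simpa using this
    have h2 := h1.exp
    have h3 := (h2.div_const (4*lam)).neg
    convert h3 using 1
    · rfl
    · rfl
    · funext u; rw [neg_div]; rfl
    · rw [← neg_div, eq_div_iff (by positivity : (4*lam) ≠ 0)]
      ring
  have hcont : IntervalIntegrable (fun t => (t - c) * rexp (-(2*lam)*(t-c)^2)) volume α β := by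
    apply Continuous.intervalIntegrable
    continuity
  rw [intervalIntegral.integral_eq_sub_of_hasDerivAt hderiv hcont]
  field_simp
  ring


private lemma carleman_halfRight {lam : ℝ} (hlam : 0 < lam) (c b : ℝ) (hcb : c ≤ b)
    (g : ℝ → ℝ) (hgm : Measurable g) (hg1 : Integrable g) (hg2 : Integrable (fun t => g t ^ 2)) :
    ∫ t in Set.Ioc c b, (∫ τ in c..t, g τ) ^ 2 * rexp (-(2*lam)*(t-c)^2)
      ≤ (1/(4*lam)) * ∫ t in Set.Ioc c b, g t ^ 2 * rexp (-(2*lam)*(t-c)^2) := by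
  set B : ℝ → ℝ := fun t => rexp (-(2*lam)*(t-c)^2) with hB
  have hBc : Continuous B := by fun_prop
  have hBpos : ∀ t, 0 < B t := fun t => exp_pos _
  have hBle1 : ∀ t, B t ≤ 1 := fun t => exp_le_one_iff.mpr (by nlinarith [sq_nonneg (t-c)])
  set P : ℝ → ℝ := fun t => ∫ τ in c..t, g τ with hP
  set Q : ℝ → ℝ := fun t => ∫ τ in c..t, g τ ^ 2 with hQ
  have hPc : Continuous P := hg1.continuous_primitive c
  have hQc : Continuous Q := hg2.continuous_primitive c
  haveI : IsFiniteMeasure (volume.restrict (Set.Ioc c b)) :=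
    ⟨by rw [Measure.restrict_apply_univ]; exact measure_Ioc_lt_top⟩
  -- pointwise Cauchy-Schwarz
  have key : ∀ t ∈ Set.Ioc c b, P t ^ 2 * B t ≤ ((t - c) * B t) * Q t := by
    intro t ht
    haveI : IsFiniteMeasure (volume.restrict (Set.Ioc c t)) :=
      ⟨by rw [Measure.restrict_apply_univ]; exact measure_Ioc_lt_top⟩
    have h1 : P t = ∫ τ in Set.Ioc c t, g τ := intervalIntegral.integral_of_le ht.1.le
    have h2 : Q t = ∫ τ in Set.Ioc c t, g τ ^ 2 := intervalIntegral.integral_of_le ht.1.le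
    have cs := carleman_sq_integral_le (μ := volume.restrict (Set.Ioc c t))
      hgm.aestronglyMeasurable hg2.integrableOn
    rw [Measure.restrict_apply_univ, Real.volume_Ioc,
      ENNReal.toReal_ofReal (by linarith [ht.1] : (0:ℝ) ≤ t - c)] at cs
    rw [h1, h2]
    calc (∫ τ in Set.Ioc c t, g τ) ^ 2 * B t
        ≤ ((t - c) * ∫ τ in Set.Ioc c t, g τ ^ 2) * B t :=
          mul_le_mul_of_nonneg_right cs (le_of_lt (hBpos t))
      _ = ((t - c) * B t) * ∫ τ in Set.Ioc c t, g τ ^ 2 := by ring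
  -- step 1 : monotone
  have hf1 : IntegrableOn (fun t => P t ^ 2 * B t) (Set.Ioc c b) volume :=
    ((hPc.pow 2).mul hBc).integrableOn_Ioc
  have hf2 : IntegrableOn (fun t => ((t - c) * B t) * Q t) (Set.Ioc c b) volume :=
    ((((continuous_id.sub continuous_const).mul hBc)).mul hQc).integrableOn_Ioc
  have step1 : ∫ t in Set.Ioc c b, P t ^ 2 * B t
      ≤ ∫ t in Set.Ioc c b, ((t - c) * B t) * Q t :=
    setIntegral_mono_on hf1 hf2 measurableSet_Ioc key
  -- Fubini setup
  set H : ℝ × ℝ → ℝ :=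
    fun q => Set.indicator {q : ℝ × ℝ | q.2 ≤ q.1}
      (fun q => ((q.1 - c) * B q.1) * g q.2 ^ 2) q with hHdef
  have hSmeas : MeasurableSet {q : ℝ × ℝ | q.2 ≤ q.1} :=
    measurableSet_le measurable_snd measurable_fst
  have hHm : Measurable H := by
    apply Measurable.indicator _ hSmeas
    exact (((measurable_fst.sub measurable_const).mul (hBc.measurable.comp measurable_fst)).mul
      ((hgm.comp measurable_snd).pow measurable_const))
  set ρ : Measure (ℝ × ℝ) :=
    (volume.restrict (Set.Ioc c b)).prod (volume.restrict (Set.Ioc c b)) with hρ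
  have hdom : Integrable (fun q : ℝ × ℝ => (b - c) * g q.2 ^ 2) ρ := by
    refine (integrable_prod_iff ?_).mpr ⟨?_, ?_⟩
    · exact ((hgm.comp measurable_snd).pow measurable_const).const_mul
        (b - c) |>.aestronglyMeasurable
    · exact Filter.Eventually.of_forall fun t => (hg2.integrableOn).const_mul _
    · show Integrable (fun _ : ℝ => ∫ τ in Set.Ioc c b, ‖(b - c) * g τ ^ 2‖)
        (volume.restrict (Set.Ioc c b))
      exact integrable_const _
  have hHint : Integrable H ρ := by
    refine hdom.mono' hHm.aestronglyMeasurable ?_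
    rw [hρ, Measure.prod_restrict]
    filter_upwards [ae_restrict_mem (measurableSet_Ioc.prod measurableSet_Ioc)] with q hq
    obtain ⟨hq1, hq2⟩ := hq
    rw [Real.norm_eq_abs]
    simp only [hHdef, Set.indicator_apply, Set.mem_setOf_eq]
    by_cases hle : q.2 ≤ q.1
    · rw [if_pos hle]
      have h0 : (0:ℝ) ≤ q.1 - c := by linarith [hq1.1]
      have h1 : q.1 - c ≤ b - c := by linarith [hq1.2]
      have habs : |((q.1 - c) * B q.1) * g q.2 ^ 2| = ((q.1 - c) * B q.1) * g q.2 ^ 2 := by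
        apply abs_of_nonneg
        have := (hBpos q.1).le
        positivity
      rw [habs]
      have hgnn : (0:ℝ) ≤ g q.2 ^ 2 := sq_nonneg _
      have hstep : (q.1 - c) * B q.1 ≤ b - c := by
        calc (q.1 - c) * B q.1 ≤ (q.1 - c) * 1 :=
              mul_le_mul_of_nonneg_left (hBle1 q.1) h0
          _ = q.1 - c := mul_one _
          _ ≤ b - c := h1
      exact mul_le_mul_of_nonneg_right hstep hgnn
    · rw [if_neg hle]
      simp only [abs_zero]
      have h1 : (0:ℝ) ≤ b - c := by linarith
      positivity
  have hswap : ∫ t in Set.Ioc c b, (∫ τ in Set.Ioc c b, H (t, τ))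
      = ∫ τ in Set.Ioc c b, ∫ t in Set.Ioc c b, H (t, τ) :=
    integral_integral_swap hHint
  -- identification A
  have idA : ∀ t ∈ Set.Ioc c b,
      (∫ τ in Set.Ioc c b, H (t, τ)) = ((t - c) * B t) * Q t := by
    intro t ht
    have h1 : ∀ τ ∈ Set.Ioc c b, H (t, τ)
        = ((t - c) * B t) * (Set.Ioc c t).indicator (fun τ => g τ ^ 2) τ := by
      intro τ hτ
      simp only [hHdef, Set.indicator_apply, Set.mem_setOf_eq, Set.mem_Ioc]
      by_cases hle : τ ≤ t
      · rw [if_pos hle, if_pos ⟨hτ.1, hle⟩]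
      · rw [if_neg hle, if_neg (fun hmem => hle hmem.2)]
        ring
    rw [setIntegral_congr_fun measurableSet_Ioc h1, integral_const_mul,
      integral_indicator measurableSet_Ioc, Measure.restrict_restrict measurableSet_Ioc,
      Set.inter_eq_left.mpr (Set.Ioc_subset_Ioc_right ht.2),
      ← intervalIntegral.integral_of_le ht.1.le]
  -- identification B
  have idB : ∀ τ ∈ Set.Ioc c b,
      (∫ t in Set.Ioc c b, H (t, τ)) = g τ ^ 2 * ((B τ - B b) / (4*lam)) := by
    intro τ hτ
    have h1 : ∀ t ∈ Set.Ioc c b, H (t, τ)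
        = (Set.Icc τ b).indicator (fun t => (t - c) * B t) t * g τ ^ 2 := by
      intro t ht
      simp only [hHdef, Set.indicator_apply, Set.mem_setOf_eq, Set.mem_Icc]
      by_cases hle : τ ≤ t
      · rw [if_pos hle, if_pos ⟨hle, ht.2⟩]
      · rw [if_neg hle, if_neg (fun hmem => hle hmem.1)]
        ring
    rw [setIntegral_congr_fun measurableSet_Ioc h1, integral_mul_const,
      integral_indicator measurableSet_Icc, Measure.restrict_restrict measurableSet_Icc,
      Set.inter_eq_left.mpr (show Set.Icc τ b ⊆ Set.Ioc c b from
        fun t htm => ⟨lt_of_lt_of_le hτ.1 htm.1, htm.2⟩),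
      integral_Icc_eq_integral_Ioc, carleman_primInt hlam c τ b hτ.2]
    ring
  -- step 3
  have step3 : ∫ τ in Set.Ioc c b, g τ ^ 2 * ((B τ - B b) / (4*lam))
      ≤ ∫ τ in Set.Ioc c b, g τ ^ 2 * (B τ / (4*lam)) := by
    refine setIntegral_mono_on ?_ ?_ measurableSet_Ioc ?_
    · refine (Integrable.bdd_mul (c := 1/(4*lam)) hg2.integrableOn ?_ ?_).congr
        (Filter.Eventually.of_forall fun t => mul_comm _ _)
      · exact (((hBc.sub continuous_const).div_const _)).aestronglyMeasurable
      · refine Filter.Eventually.of_forall fun t => ?_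
        rw [Real.norm_eq_abs, abs_div, abs_of_nonneg (by positivity : (0:ℝ) ≤ 4*lam), div_le_div_iff_of_pos_right (by positivity)]
        rw [abs_sub_le_iff]
        constructor
        · linarith [hBle1 t, (hBpos b).le]
        · linarith [hBle1 b, (hBpos t).le]
    · refine (Integrable.bdd_mul (c := 1/(4*lam)) hg2.integrableOn ?_ ?_).congr
        (Filter.Eventually.of_forall fun t => mul_comm _ _)
      · exact (hBc.div_const _).aestronglyMeasurable
      · refine Filter.Eventually.of_forall fun t => ?_
        rw [Real.norm_eq_abs, abs_div, abs_of_nonneg (by positivity : (0:ℝ) ≤ 4*lam),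
          abs_of_nonneg (hBpos t).le, div_le_div_iff_of_pos_right (by positivity)]
        exact hBle1 t
    · intro τ _
      apply mul_le_mul_of_nonneg_left _ (sq_nonneg _)
      apply div_le_div_of_nonneg_right _ (by positivity)
      linarith [(hBpos b).le]
  -- assemble
  calc ∫ t in Set.Ioc c b, P t ^ 2 * B t
      ≤ ∫ t in Set.Ioc c b, ((t - c) * B t) * Q t := step1
    _ = ∫ t in Set.Ioc c b, (∫ τ in Set.Ioc c b, H (t, τ)) :=
        (setIntegral_congr_fun measurableSet_Ioc fun t ht => idA t ht).symm
    _ = ∫ τ in Set.Ioc c b, ∫ t in Set.Ioc c b, H (t, τ) := hswap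
    _ = ∫ τ in Set.Ioc c b, g τ ^ 2 * ((B τ - B b) / (4*lam)) :=
        setIntegral_congr_fun measurableSet_Ioc idB
    _ ≤ ∫ τ in Set.Ioc c b, g τ ^ 2 * (B τ / (4*lam)) := step3
    _ = (1/(4*lam)) * ∫ t in Set.Ioc c b, g t ^ 2 * B t := by
        rw [← integral_const_mul]
        apply setIntegral_congr_fun measurableSet_Ioc
        intro τ _
        ring


private lemma carleman_halfLeft {lam : ℝ} (hlam : 0 < lam) (c a : ℝ) (hac : a ≤ c)
    (g : ℝ → ℝ) (hgm : Measurable g) (hg1 : Integrable g) (hg2 : Integrable (fun t => g t ^ 2)) :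
    ∫ t in Set.Ioc a c, (∫ τ in c..t, g τ) ^ 2 * rexp (-(2*lam)*(t-c)^2)
      ≤ (1/(4*lam)) * ∫ t in Set.Ioc a c, g t ^ 2 * rexp (-(2*lam)*(t-c)^2) := by
  set B : ℝ → ℝ := fun t => rexp (-(2*lam)*(t-c)^2) with hB
  have hBc : Continuous B := by fun_prop
  have hBpos : ∀ t, 0 < B t := fun t => exp_pos _
  have hBle1 : ∀ t, B t ≤ 1 := fun t => exp_le_one_iff.mpr (by nlinarith [sq_nonneg (t-c)])
  set P : ℝ → ℝ := fun t => ∫ τ in c..t, g τ with hP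
  set Q : ℝ → ℝ := fun t => ∫ τ in c..t, g τ ^ 2 with hQ
  have hPc : Continuous P := hg1.continuous_primitive c
  have hQc : Continuous Q := hg2.continuous_primitive c
  have hQneg : ∀ t, t ≤ c → -Q t = ∫ τ in Set.Ioc t c, g τ ^ 2 := by
    intro t htc
    rw [hQ]
    simp only
    rw [intervalIntegral.integral_symm t c, neg_neg, intervalIntegral.integral_of_le htc]
  haveI : IsFiniteMeasure (volume.restrict (Set.Ioc a c)) :=
    ⟨by rw [Measure.restrict_apply_univ]; exact measure_Ioc_lt_top⟩
  -- pointwise Cauchy-Schwarz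
  have key : ∀ t ∈ Set.Ioc a c, P t ^ 2 * B t ≤ ((c - t) * B t) * (-Q t) := by
    intro t ht
    haveI : IsFiniteMeasure (volume.restrict (Set.Ioc t c)) :=
      ⟨by rw [Measure.restrict_apply_univ]; exact measure_Ioc_lt_top⟩
    have h1 : P t = -∫ τ in Set.Ioc t c, g τ := by
      rw [hP]
      simp only
      rw [intervalIntegral.integral_symm t c, intervalIntegral.integral_of_le ht.2]
    have cs := carleman_sq_integral_le (μ := volume.restrict (Set.Ioc t c))
      hgm.aestronglyMeasurable hg2.integrableOn
    rw [Measure.restrict_apply_univ, Real.volume_Ioc,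
      ENNReal.toReal_ofReal (by linarith [ht.2] : (0:ℝ) ≤ c - t)] at cs
    rw [h1, hQneg t ht.2, neg_sq]
    calc (∫ τ in Set.Ioc t c, g τ) ^ 2 * B t
        ≤ ((c - t) * ∫ τ in Set.Ioc t c, g τ ^ 2) * B t :=
          mul_le_mul_of_nonneg_right cs (hBpos t).le
      _ = ((c - t) * B t) * ∫ τ in Set.Ioc t c, g τ ^ 2 := by ring
  -- step 1 : monotone
  have hf1 : IntegrableOn (fun t => P t ^ 2 * B t) (Set.Ioc a c) volume :=
    ((hPc.pow 2).mul hBc).integrableOn_Ioc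
  have hf2 : IntegrableOn (fun t => ((c - t) * B t) * (-Q t)) (Set.Ioc a c) volume :=
    (((continuous_const.sub continuous_id).mul hBc).mul hQc.neg).integrableOn_Ioc
  have step1 : ∫ t in Set.Ioc a c, P t ^ 2 * B t
      ≤ ∫ t in Set.Ioc a c, ((c - t) * B t) * (-Q t) :=
    setIntegral_mono_on hf1 hf2 measurableSet_Ioc key
  -- Fubini setup
  set H : ℝ × ℝ → ℝ :=
    fun q => Set.indicator {q : ℝ × ℝ | q.1 < q.2}
      (fun q => ((c - q.1) * B q.1) * g q.2 ^ 2) q with hHdef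
  have hSmeas : MeasurableSet {q : ℝ × ℝ | q.1 < q.2} :=
    measurableSet_lt measurable_fst measurable_snd
  have hHm : Measurable H := by
    apply Measurable.indicator _ hSmeas
    exact (((measurable_const.sub measurable_fst).mul (hBc.measurable.comp measurable_fst)).mul
      ((hgm.comp measurable_snd).pow measurable_const))
  set ρ : Measure (ℝ × ℝ) :=
    (volume.restrict (Set.Ioc a c)).prod (volume.restrict (Set.Ioc a c)) with hρ
  have hdom : Integrable (fun q : ℝ × ℝ => (c - a) * g q.2 ^ 2) ρ := by
    refine (integrable_prod_iff ?_).mpr ⟨?_, ?_⟩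
    · exact ((hgm.comp measurable_snd).pow measurable_const).const_mul
        (c - a) |>.aestronglyMeasurable
    · exact Filter.Eventually.of_forall fun t => (hg2.integrableOn).const_mul _
    · show Integrable (fun _ : ℝ => ∫ τ in Set.Ioc a c, ‖(c - a) * g τ ^ 2‖)
        (volume.restrict (Set.Ioc a c))
      exact integrable_const _
  have hHint : Integrable H ρ := by
    refine hdom.mono' hHm.aestronglyMeasurable ?_
    rw [hρ, Measure.prod_restrict]
    filter_upwards [ae_restrict_mem (measurableSet_Ioc.prod measurableSet_Ioc)] with q hq
    obtain ⟨hq1, hq2⟩ := hq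
    rw [Real.norm_eq_abs]
    simp only [hHdef, Set.indicator_apply, Set.mem_setOf_eq]
    by_cases hle : q.1 < q.2
    · rw [if_pos hle]
      have h0 : (0:ℝ) ≤ c - q.1 := by linarith [hq1.2]
      have h1 : c - q.1 ≤ c - a := by linarith [hq1.1]
      have habs : |((c - q.1) * B q.1) * g q.2 ^ 2| = ((c - q.1) * B q.1) * g q.2 ^ 2 := by
        apply abs_of_nonneg
        have := (hBpos q.1).le
        positivity
      rw [habs]
      have hgnn : (0:ℝ) ≤ g q.2 ^ 2 := sq_nonneg _
      have hstep : (c - q.1) * B q.1 ≤ c - a := by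
        calc (c - q.1) * B q.1 ≤ (c - q.1) * 1 :=
              mul_le_mul_of_nonneg_left (hBle1 q.1) h0
          _ = c - q.1 := mul_one _
          _ ≤ c - a := h1
      exact mul_le_mul_of_nonneg_right hstep hgnn
    · rw [if_neg hle]
      simp only [abs_zero]
      have h1 : (0:ℝ) ≤ c - a := by linarith
      positivity
  have hswap : ∫ t in Set.Ioc a c, (∫ τ in Set.Ioc a c, H (t, τ))
      = ∫ τ in Set.Ioc a c, ∫ t in Set.Ioc a c, H (t, τ) :=
    integral_integral_swap hHint
  -- identification A
  have idA : ∀ t ∈ Set.Ioc a c,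
      (∫ τ in Set.Ioc a c, H (t, τ)) = ((c - t) * B t) * (-Q t) := by
    intro t ht
    have h1 : ∀ τ ∈ Set.Ioc a c, H (t, τ)
        = ((c - t) * B t) * (Set.Ioc t c).indicator (fun τ => g τ ^ 2) τ := by
      intro τ hτ
      simp only [hHdef, Set.indicator_apply, Set.mem_setOf_eq, Set.mem_Ioc]
      by_cases hle : t < τ
      · rw [if_pos hle, if_pos ⟨hle, hτ.2⟩]
      · rw [if_neg hle, if_neg (fun hmem => hle hmem.1)]
        ring
    rw [setIntegral_congr_fun measurableSet_Ioc h1, integral_const_mul,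
      integral_indicator measurableSet_Ioc, Measure.restrict_restrict measurableSet_Ioc,
      Set.inter_eq_left.mpr (Set.Ioc_subset_Ioc_left ht.1.le),
      ← hQneg t ht.2]
  -- identification B
  have idB : ∀ τ ∈ Set.Ioc a c,
      (∫ t in Set.Ioc a c, H (t, τ)) = g τ ^ 2 * ((B τ - B a) / (4*lam)) := by
    intro τ hτ
    have h1 : ∀ t ∈ Set.Ioc a c, H (t, τ)
        = (Set.Ioo a τ).indicator (fun t => (c - t) * B t) t * g τ ^ 2 := by
      intro t ht
      simp only [hHdef, Set.indicator_apply, Set.mem_setOf_eq, Set.mem_Ioo]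
      by_cases hle : t < τ
      · rw [if_pos hle, if_pos ⟨ht.1, hle⟩]
      · rw [if_neg hle, if_neg (fun hmem => hle hmem.2)]
        ring
    have hneg : ∫ t in Set.Ioc a τ, ((c - t) * B t)
        = (B τ - B a) / (4*lam) := by
      have h2 : ∀ t ∈ Set.Ioc a τ, (c - t) * B t = -((t - c) * B t) := by
        intro t _; ring
      rw [setIntegral_congr_fun measurableSet_Ioc h2, integral_neg,
        carleman_primInt hlam c a τ hτ.1.le]
      ring
    rw [setIntegral_congr_fun measurableSet_Ioc h1, integral_mul_const,
      integral_indicator measurableSet_Ioo, Measure.restrict_restrict measurableSet_Ioo,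
      Set.inter_eq_left.mpr (show Set.Ioo a τ ⊆ Set.Ioc a c from
        fun t htm => ⟨htm.1, le_trans htm.2.le hτ.2⟩),
      ← integral_Ioc_eq_integral_Ioo, hneg]
    ring
  -- step 3
  have step3 : ∫ τ in Set.Ioc a c, g τ ^ 2 * ((B τ - B a) / (4*lam))
      ≤ ∫ τ in Set.Ioc a c, g τ ^ 2 * (B τ / (4*lam)) := by
    refine setIntegral_mono_on ?_ ?_ measurableSet_Ioc ?_
    · refine (Integrable.bdd_mul (c := 1/(4*lam)) hg2.integrableOn ?_ ?_).congr
        (Filter.Eventually.of_forall fun t => mul_comm _ _)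
      · exact (((hBc.sub continuous_const).div_const _)).aestronglyMeasurable
      · refine Filter.Eventually.of_forall fun t => ?_
        rw [Real.norm_eq_abs, abs_div, abs_of_nonneg (by positivity : (0:ℝ) ≤ 4*lam),
          div_le_div_iff_of_pos_right (by positivity)]
        rw [abs_sub_le_iff]
        constructor
        · linarith [hBle1 t, (hBpos a).le]
        · linarith [hBle1 a, (hBpos t).le]
    · refine (Integrable.bdd_mul (c := 1/(4*lam)) hg2.integrableOn ?_ ?_).congr
        (Filter.Eventually.of_forall fun t => mul_comm _ _)
      · exact (hBc.div_const _).aestronglyMeasurable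
      · refine Filter.Eventually.of_forall fun t => ?_
        rw [Real.norm_eq_abs, abs_div, abs_of_nonneg (by positivity : (0:ℝ) ≤ 4*lam),
          abs_of_nonneg (hBpos t).le, div_le_div_iff_of_pos_right (by positivity)]
        exact hBle1 t
    · intro τ _
      apply mul_le_mul_of_nonneg_left _ (sq_nonneg _)
      apply div_le_div_of_nonneg_right _ (by positivity)
      linarith [(hBpos a).le]
  -- assemble
  calc ∫ t in Set.Ioc a c, P t ^ 2 * B t
      ≤ ∫ t in Set.Ioc a c, ((c - t) * B t) * (-Q t) := step1
    _ = ∫ t in Set.Ioc a c, (∫ τ in Set.Ioc a c, H (t, τ)) :=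
        (setIntegral_congr_fun measurableSet_Ioc fun t ht => idA t ht).symm
    _ = ∫ τ in Set.Ioc a c, ∫ t in Set.Ioc a c, H (t, τ) := hswap
    _ = ∫ τ in Set.Ioc a c, g τ ^ 2 * ((B τ - B a) / (4*lam)) :=
        setIntegral_congr_fun measurableSet_Ioc idB
    _ ≤ ∫ τ in Set.Ioc a c, g τ ^ 2 * (B τ / (4*lam)) := step3
    _ = (1/(4*lam)) * ∫ t in Set.Ioc a c, g t ^ 2 * B t := by
        rw [← integral_const_mul]
        apply setIntegral_congr_fun measurableSet_Ioc
        intro τ _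
        ring


private lemma carleman_oneDim {lam T : ℝ} (hlam : 0 < lam) (hT : 0 < T)
    (g : ℝ → ℝ) (hgm : Measurable g) (hg1 : Integrable g) (hg2 : Integrable (fun t => g t ^ 2)) :
    ∫ t in Set.Ioo 0 T, (∫ τ in (T/2)..t, g τ) ^ 2 * rexp (-(2*lam)*(t-T/2)^2)
      ≤ (1/(4*lam)) * ∫ t in Set.Ioo 0 T, g t ^ 2 * rexp (-(2*lam)*(t-T/2)^2) := by
  have hc0 : (0:ℝ) ≤ T/2 := by linarith
  have hcT : T/2 ≤ T := by linarith
  have hBc : Continuous fun t : ℝ => rexp (-(2*lam)*(t-T/2)^2) := by fun_prop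
  have hBle1 : ∀ t : ℝ, rexp (-(2*lam)*(t-T/2)^2) ≤ 1 := fun t =>
    exp_le_one_iff.mpr (by nlinarith [sq_nonneg (t-T/2)])
  have hPc : Continuous fun t : ℝ => ∫ τ in (T/2)..t, g τ := hg1.continuous_primitive _
  have hf1 : ∀ u v : ℝ, IntegrableOn
      (fun t => (∫ τ in (T/2)..t, g τ) ^ 2 * rexp (-(2*lam)*(t-T/2)^2)) (Set.Ioc u v) volume :=
    fun u v => ((hPc.pow 2).mul hBc).integrableOn_Ioc
  have hf2 : ∀ s : Set ℝ, IntegrableOn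
      (fun t => g t ^ 2 * rexp (-(2*lam)*(t-T/2)^2)) s volume := by
    intro s
    refine (Integrable.bdd_mul (c := 1) hg2.integrableOn
      hBc.aestronglyMeasurable ?_).congr (Filter.Eventually.of_forall fun t => mul_comm _ _)
    exact Filter.Eventually.of_forall fun t => by
      rw [Real.norm_eq_abs, abs_of_nonneg (exp_pos _).le]; exact hBle1 t
  have hsplit : ∀ f : ℝ → ℝ, IntegrableOn f (Set.Ioc 0 (T/2)) volume →
      IntegrableOn f (Set.Ioc (T/2) T) volume →
      ∫ t in Set.Ioo 0 T, f t = (∫ t in Set.Ioc 0 (T/2), f t) + ∫ t in Set.Ioc (T/2) T, f t := by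
    intro f h1 h2
    rw [← integral_Ioc_eq_integral_Ioo, ← Set.Ioc_union_Ioc_eq_Ioc hc0 hcT,
      setIntegral_union (Set.Ioc_disjoint_Ioc_of_le le_rfl) measurableSet_Ioc h1 h2]
  rw [hsplit _ (hf1 0 (T/2)) (hf1 (T/2) T), hsplit _ (hf2 _) (hf2 _), mul_add]
  exact add_le_add
    (carleman_halfLeft hlam (T/2) 0 hc0 g hgm hg1 hg2)
    (carleman_halfRight hlam (T/2) T hcT g hgm hg1 hg2)


/-- Lemma 4.2: Carleman estimate for the Volterra integral operator.
`Q_T = Ω × (0,T)` with `Ω ⊂ ℝⁿ` bounded, weight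
`φ_λ(x,t) = exp (2λ((x 0)² - (t - T/2)²))`. For every `λ > 0` and every
`s ∈ L₂(Q_T)`,
`∫_{Q_T} (∫_{T/2}^t s(x,τ) dτ)² φ_λ ≤ (C₂/λ) ∫_{Q_T} s² φ_λ`,
with `C₂ > 0` independent of `λ` and `s`. -/
theorem stmt_0 (n : ℕ) (hn : 0 < n) (Ω : Set (EuclideanSpace ℝ (Fin n)))
    (hΩ : Bornology.IsBounded Ω) (T : ℝ) (hT : 0 < T) :
    ∃ C₂ > (0 : ℝ), ∀ lam > (0 : ℝ),
      ∀ s : EuclideanSpace ℝ (Fin n) → ℝ → ℝ,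
        MemLp (fun p : EuclideanSpace ℝ (Fin n) × ℝ => s p.1 p.2) 2
          ((volume.restrict Ω).prod (volume.restrict (Set.Ioo 0 T))) →
        ∫ p : EuclideanSpace ℝ (Fin n) × ℝ in Ω ×ˢ Set.Ioo 0 T,
            (∫ τ in (T / 2)..p.2, s p.1 τ) ^ 2 *
              Real.exp (2 * lam * ((p.1 ⟨0, hn⟩) ^ 2 - (p.2 - T / 2) ^ 2)) ≤
          (C₂ / lam) *
            ∫ p : EuclideanSpace ℝ (Fin n) × ℝ in Ω ×ˢ Set.Ioo 0 T,
              (s p.1 p.2) ^ 2 *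
                Real.exp (2 * lam * ((p.1 ⟨0, hn⟩) ^ 2 - (p.2 - T / 2) ^ 2)) := by
  refine ⟨1/4, by norm_num, ?_⟩
  intro lam hlam s hs
  classical
  set i0 : Fin n := ⟨0, hn⟩ with hi0
  set μ0 : Measure (EuclideanSpace ℝ (Fin n)) := volume.restrict Ω with hμ0
  set ν : Measure ℝ := volume.restrict (Set.Ioo 0 T) with hν
  set μ : Measure (EuclideanSpace ℝ (Fin n) × ℝ) := μ0.prod ν with hμ
  haveI : IsFiniteMeasure ν :=
    ⟨by rw [hν, Measure.restrict_apply_univ]; exact measure_Ioo_lt_top⟩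
  obtain ⟨R, hRsub⟩ := hΩ.subset_closedBall 0
  haveI : IsFiniteMeasure μ0 := by
    refine ⟨?_⟩
    rw [hμ0, Measure.restrict_apply_univ]
    exact lt_of_le_of_lt (measure_mono hRsub) (isCompact_closedBall 0 R).measure_lt_top
  have hvol : (volume : Measure (EuclideanSpace ℝ (Fin n) × ℝ)).restrict (Ω ×ˢ Set.Ioo 0 T) = μ := by
    rw [hμ, hμ0, hν, Measure.prod_restrict, ← Measure.volume_eq_prod]
  set A : EuclideanSpace ℝ (Fin n) → ℝ := fun x => rexp (2*lam*(x i0)^2) with hA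
  set Bt : ℝ → ℝ := fun t => rexp (-(2*lam)*(t-T/2)^2) with hBt
  have hWsplit : ∀ p : EuclideanSpace ℝ (Fin n) × ℝ,
      rexp (2 * lam * ((p.1 i0) ^ 2 - (p.2 - T/2) ^ 2)) = A p.1 * Bt p.2 := by
    intro p
    rw [hA, hBt]
    simp only
    rw [← Real.exp_add]
    congr 1
    ring
  rw [show ((volume : Measure (EuclideanSpace ℝ (Fin n) × ℝ)).restrict (Ω ×ˢ Set.Ioo 0 T)) = μ
    from hvol]
  simp only [hWsplit]
  -- basic facts
  have hApos : ∀ x, 0 < A x := fun x => exp_pos _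
  have hBtpos : ∀ t, 0 < Bt t := fun t => exp_pos _
  have hBtle1 : ∀ t, Bt t ≤ 1 := fun t => exp_le_one_iff.mpr (by nlinarith [sq_nonneg (t-T/2)])
  have hxi : Measurable fun x : EuclideanSpace ℝ (Fin n) => x i0 := by
    exact (measurable_pi_apply i0).comp (WithLp.measurable_ofLp _ _)
  have hAm : Measurable A := by
    apply Real.measurable_exp.comp
    exact (hxi.pow_const 2).const_mul (2*lam)
  have hBtc : Continuous Bt := by fun_prop
  have hcoord : ∀ x : EuclideanSpace ℝ (Fin n), (x i0)^2 ≤ ‖x‖^2 := by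
    intro x
    rw [EuclideanSpace.norm_eq, Real.sq_sqrt (by positivity)]
    have h := Finset.single_le_sum (f := fun i => ‖x i‖^2)
      (fun i _ => by positivity) (Finset.mem_univ i0)
    simpa [Real.norm_eq_abs, sq_abs] using h
  have hA_ae : ∀ᵐ x ∂μ0, A x ≤ rexp (2*lam*R^2) := by
    have hnull : μ0 {x : EuclideanSpace ℝ (Fin n) | R < ‖x‖} = 0 := by
      rw [hμ0, Measure.restrict_apply (measurableSet_lt measurable_const measurable_norm)]
      have : {x : EuclideanSpace ℝ (Fin n) | R < ‖x‖} ∩ Ω = ∅ := by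
        ext x
        simp only [Set.mem_inter_iff, Set.mem_setOf_eq, Set.mem_empty_iff_false, iff_false]
        rintro ⟨hx1, hx2⟩
        have := hRsub hx2
        rw [Metric.mem_closedBall, dist_zero_right] at this
        linarith
      rw [this, measure_empty]
    have hae : ∀ᵐ x ∂μ0, ‖x‖ ≤ R := by
      rw [MeasureTheory.ae_iff]
      convert hnull using 2
      ext x
      simp [not_le]
    filter_upwards [hae] with x hx
    rw [hA]
    apply exp_le_exp.mpr
    apply mul_le_mul_of_nonneg_left _ (by positivity : (0:ℝ) ≤ 2*lam)
    calc (x i0)^2 ≤ ‖x‖^2 := hcoord x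
      _ ≤ R^2 := by nlinarith [norm_nonneg x]
  have hABm : AEStronglyMeasurable (fun p : EuclideanSpace ℝ (Fin n) × ℝ => A p.1 * Bt p.2) μ :=
    ((hAm.comp measurable_fst).mul (hBtc.measurable.comp measurable_snd)).aestronglyMeasurable
  have hW_bound : ∀ᵐ p ∂μ, ‖A p.1 * Bt p.2‖ ≤ rexp (2*lam*R^2) := by
    have hfst : ∀ᵐ p : EuclideanSpace ℝ (Fin n) × ℝ ∂μ, A p.1 ≤ rexp (2*lam*R^2) :=
      (Measure.quasiMeasurePreserving_fst (μ := μ0) (ν := ν)).tendsto_ae.eventually hA_ae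
    filter_upwards [hfst] with p hp
    rw [Real.norm_eq_abs, abs_of_nonneg (by positivity : (0:ℝ) ≤ A p.1 * Bt p.2)]
    calc A p.1 * Bt p.2 ≤ A p.1 * 1 := mul_le_mul_of_nonneg_left (hBtle1 _) (hApos _).le
      _ = A p.1 := mul_one _
      _ ≤ rexp (2*lam*R^2) := hp
  have hs2 : Integrable (fun p : EuclideanSpace ℝ (Fin n) × ℝ => s p.1 p.2 ^ 2) μ :=
    hs.integrable_sq
  have hRint : Integrable
      (fun p : EuclideanSpace ℝ (Fin n) × ℝ => s p.1 p.2 ^ 2 * (A p.1 * Bt p.2)) μ :=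
    (hs2.bdd_mul hABm hW_bound).congr
      (Filter.Eventually.of_forall fun p => mul_comm _ _)
  have hRHSnn : 0 ≤ ∫ p, s p.1 p.2 ^ 2 * (A p.1 * Bt p.2) ∂μ :=
    integral_nonneg fun p => by positivity
  by_cases hL : Integrable
      (fun p : EuclideanSpace ℝ (Fin n) × ℝ =>
        (∫ τ in (T/2)..p.2, s p.1 τ) ^ 2 * (A p.1 * Bt p.2)) μ
  swap
  · rw [integral_undef hL]
    exact mul_nonneg (by positivity) hRHSnn
  -- measurable representative
  have hsm := hs.aestronglyMeasurable
  set S' : EuclideanSpace ℝ (Fin n) × ℝ → ℝ := hsm.mk _ with hS'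
  have hS'sm : StronglyMeasurable S' := hsm.stronglyMeasurable_mk
  have haeS : (fun p : EuclideanSpace ℝ (Fin n) × ℝ => s p.1 p.2) =ᵐ[μ] S' := hsm.ae_eq_mk
  have haeslice : ∀ᵐ x ∂μ0, ∀ᵐ t ∂ν, s x t = S' (x, t) := Measure.ae_ae_of_ae_prod haeS
  have hmem2 : ∀ᵐ p : EuclideanSpace ℝ (Fin n) × ℝ ∂μ, p.2 ∈ Set.Ioo (0:ℝ) T :=
    (Measure.quasiMeasurePreserving_snd (μ := μ0) (ν := ν)).tendsto_ae.eventually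
      (by rw [hν] at *; exact ae_restrict_mem measurableSet_Ioo)
  have hslice_prod : ∀ᵐ p : EuclideanSpace ℝ (Fin n) × ℝ ∂μ, ∀ᵐ t ∂ν, s p.1 t = S' (p.1, t) :=
    (Measure.quasiMeasurePreserving_fst (μ := μ0) (ν := ν)).tendsto_ae.eventually haeslice
  have hsubIoo : ∀ t ∈ Set.Ioo (0:ℝ) T, Set.uIcc (T/2) t ⊆ Set.Ioo 0 T := fun t ht =>
    Set.ordConnected_Ioo.uIcc_subset ⟨by linarith, by linarith⟩ ht
  have hLL' : (fun p : EuclideanSpace ℝ (Fin n) × ℝ =>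
        (∫ τ in (T/2)..p.2, s p.1 τ) ^ 2 * (A p.1 * Bt p.2)) =ᵐ[μ]
      (fun p => (∫ τ in (T/2)..p.2, S' (p.1, τ)) ^ 2 * (A p.1 * Bt p.2)) := by
    filter_upwards [hmem2, hslice_prod] with p hp2 hps
    have hae' : ∀ᵐ τ ∂volume, τ ∈ Set.uIoc (T/2) p.2 → s p.1 τ = S' (p.1, τ) := by
      have h1 : (fun τ => s p.1 τ) =ᵐ[volume.restrict (Set.uIoc (T/2) p.2)]
          fun τ => S' (p.1, τ) := by
        apply ae_restrict_of_ae_restrict_of_subset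
          ((Set.uIoc_subset_uIcc).trans (hsubIoo p.2 hp2))
        rw [hν] at hps
        exact hps
      exact (ae_restrict_iff' measurableSet_uIoc).mp h1
    rw [intervalIntegral.integral_congr_ae hae']
  have hL' : Integrable
      (fun p : EuclideanSpace ℝ (Fin n) × ℝ =>
        (∫ τ in (T/2)..p.2, S' (p.1, τ)) ^ 2 * (A p.1 * Bt p.2)) μ := hL.congr hLL'
  have hRR' : (fun p : EuclideanSpace ℝ (Fin n) × ℝ => s p.1 p.2 ^ 2 * (A p.1 * Bt p.2)) =ᵐ[μ]
      (fun p => S' p ^ 2 * (A p.1 * Bt p.2)) := by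
    filter_upwards [haeS] with p hp
    rw [hp]
  have hR'int : Integrable
      (fun p : EuclideanSpace ℝ (Fin n) × ℝ => S' p ^ 2 * (A p.1 * Bt p.2)) μ :=
    hRint.congr hRR'
  rw [integral_congr_ae hLL', integral_congr_ae hRR']
  -- Fubini
  have fubL := integral_prod (μ := μ0) (ν := ν)
    (fun p : EuclideanSpace ℝ (Fin n) × ℝ =>
      (∫ τ in (T/2)..p.2, S' (p.1, τ)) ^ 2 * (A p.1 * Bt p.2)) hL'
  have fubR := integral_prod (μ := μ0) (ν := ν)
    (fun p : EuclideanSpace ℝ (Fin n) × ℝ => S' p ^ 2 * (A p.1 * Bt p.2)) hR'int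
  rw [show (∫ p, (∫ τ in (T/2)..p.2, S' (p.1, τ)) ^ 2 * (A p.1 * Bt p.2) ∂μ)
      = ∫ x, ∫ t, (∫ τ in (T/2)..t, S' (x, τ)) ^ 2 * (A x * Bt t) ∂ν ∂μ0 from fubL,
    show (∫ p, S' p ^ 2 * (A p.1 * Bt p.2) ∂μ)
      = ∫ x, ∫ t, S' (x, t) ^ 2 * (A x * Bt t) ∂ν ∂μ0 from fubR]
  -- inner 1D estimate
  set cB : ℝ := rexp (-(2*lam)*(T/2)^2) with hcB
  have hcBpos : 0 < cB := exp_pos _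
  have hBtlow : ∀ t ∈ Set.Ioo (0:ℝ) T, cB ≤ Bt t := by
    intro t ht
    rw [hcB, hBt]
    apply exp_le_exp.mpr
    have h1 : (t-T/2)^2 ≤ (T/2)^2 := by nlinarith [ht.1, ht.2]
    nlinarith [mul_le_mul_of_nonneg_left h1 (by positivity : (0:ℝ) ≤ 2*lam)]
  have hinner : ∀ᵐ x ∂μ0, (∫ t, (∫ τ in (T/2)..t, S' (x, τ)) ^ 2 * (A x * Bt t) ∂ν)
      ≤ (1/(4*lam)) * ∫ t, S' (x, t) ^ 2 * (A x * Bt t) ∂ν := by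
    have hprae : ∀ᵐ x ∂μ0, Integrable (fun t => S' (x, t) ^ 2 * (A x * Bt t)) ν :=
      hR'int.prod_right_ae
    filter_upwards [hprae] with x hxint
    have hslicem : Measurable fun t => S' (x, t) :=
      hS'sm.measurable.comp measurable_prodMk_left
    set gx : ℝ → ℝ := (Set.Ioo 0 T).indicator (fun t => S' (x, t)) with hgx
    have hgxm : Measurable gx := hslicem.indicator measurableSet_Ioo
    have hgx2' : Integrable (fun t => S' (x, t) ^ 2) ν := by
      refine Integrable.mono' (hxint.div_const (A x * cB))
        ((hslicem.pow_const 2).aestronglyMeasurable) ?_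
      have : ∀ᵐ t ∂ν, t ∈ Set.Ioo (0:ℝ) T := by
        rw [hν]; exact ae_restrict_mem measurableSet_Ioo
      filter_upwards [this] with t ht
      rw [Real.norm_eq_abs, abs_of_nonneg (sq_nonneg _), le_div_iff₀ (by positivity)]
      calc S' (x, t) ^ 2 * (A x * cB) ≤ S' (x, t) ^ 2 * (A x * Bt t) := by
            apply mul_le_mul_of_nonneg_left _ (sq_nonneg _)
            exact mul_le_mul_of_nonneg_left (hBtlow t ht) (hApos x).le
        _ = S' (x, t) ^ 2 * (A x * Bt t) := rfl
    have hgx2 : Integrable (fun t => gx t ^ 2) volume := by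
      have heq : (fun t => gx t ^ 2) = (Set.Ioo 0 T).indicator (fun t => S' (x, t) ^ 2) := by
        funext t
        rw [hgx]
        by_cases ht : t ∈ Set.Ioo (0:ℝ) T <;> simp [Set.indicator_apply, ht]
      rw [heq, integrable_indicator_iff measurableSet_Ioo]
      rw [hν] at hgx2'
      exact hgx2'
    have hgx1 : Integrable gx volume := by
      rw [hgx, integrable_indicator_iff measurableSet_Ioo]
      have := carleman_int_of_sq (μ := ν) hslicem.aestronglyMeasurable hgx2'
      rw [hν] at this
      exact this
    have key1D := carleman_oneDim hlam hT gx hgxm hgx1 hgx2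
    have hEqL : (∫ t, (∫ τ in (T/2)..t, S' (x, τ)) ^ 2 * (A x * Bt t) ∂ν)
        = A x * ∫ t in Set.Ioo 0 T, (∫ τ in (T/2)..t, gx τ) ^ 2 * rexp (-(2*lam)*(t-T/2)^2) := by
      rw [hν, ← integral_const_mul]
      apply setIntegral_congr_fun measurableSet_Ioo
      intro t ht
      have hiv : ∫ τ in (T/2)..t, S' (x, τ) = ∫ τ in (T/2)..t, gx τ :=
        intervalIntegral.integral_congr (fun τ hτ => by
          rw [hgx, Set.indicator_of_mem (hsubIoo t ht hτ)])
      simp only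
      rw [hiv, hBt]
      ring
    have hEqR : (∫ t, S' (x, t) ^ 2 * (A x * Bt t) ∂ν)
        = A x * ∫ t in Set.Ioo 0 T, gx t ^ 2 * rexp (-(2*lam)*(t-T/2)^2) := by
      rw [hν, ← integral_const_mul]
      apply setIntegral_congr_fun measurableSet_Ioo
      intro t ht
      simp only
      rw [hgx, Set.indicator_of_mem ht, hBt]
      ring
    rw [hEqL, hEqR]
    calc A x * ∫ t in Set.Ioo 0 T, (∫ τ in (T/2)..t, gx τ) ^ 2 * rexp (-(2*lam)*(t-T/2)^2)
        ≤ A x * ((1/(4*lam)) * ∫ t in Set.Ioo 0 T, gx t ^ 2 * rexp (-(2*lam)*(t-T/2)^2)) :=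
          mul_le_mul_of_nonneg_left key1D (hApos x).le
      _ = (1/(4*lam)) * (A x * ∫ t in Set.Ioo 0 T, gx t ^ 2 * rexp (-(2*lam)*(t-T/2)^2)) := by
          ring
  -- outer integration
  have hIL : Integrable (fun x => ∫ t, (∫ τ in (T/2)..t, S' (x, τ)) ^ 2 * (A x * Bt t) ∂ν) μ0 :=
    hL'.integral_prod_left
  have hIR : Integrable (fun x => (1/(4*lam)) * ∫ t, S' (x, t) ^ 2 * (A x * Bt t) ∂ν) μ0 :=
    (hR'int.integral_prod_left).const_mul _
  calc ∫ x, ∫ t, (∫ τ in (T/2)..t, S' (x, τ)) ^ 2 * (A x * Bt t) ∂ν ∂μ0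
      ≤ ∫ x, (1/(4*lam)) * ∫ t, S' (x, t) ^ 2 * (A x * Bt t) ∂ν ∂μ0 :=
        integral_mono_ae hIL hIR hinner
    _ = (1/4)/lam * ∫ x, ∫ t, S' (x, t) ^ 2 * (A x * Bt t) ∂ν ∂μ0 := by
        rw [integral_const_mul]
        congr 1
        rw [div_div]

end CarlemanHelpers
end

section
/- Let $\Omega$, $\Omega_1$, $\varphi_\lambda$ be as above, and suppose $Y_2 \in L_\infty(\Omega \times \Omega)$ with $\|Y_2\|_{L_\infty} \le M$. Then there exists $C_1 = C_1(\Omega, M) > 0$ such that for all $\lambda > 0$ and all $s \in L_2(Q_T)$: $\int_{Q_T} \left[ \int_{\Omega_1} \left( \int_{x_1}^{b} Y_2(x_1, \bar x, y_1, \bar y)\, s(y_1, \bar y, t)\, dy_1 \right) d\bar y \right]^2 \varphi_\lambda(x_1, t)\, dx\, dt \le C_1 \int_{Q_T} s^2 \varphi_\lambda\, dx\, dt$. -/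
open MeasureTheory Real

lemma cs_helper {α : Type*} [MeasurableSpace α] {μ : Measure α} [IsFiniteMeasure μ]
    {w : α → ℝ} (hw : 0 ≤ᵐ[μ] w) (h2 : MemLp w 2 μ) :
    (∫ x, w x ∂μ) ^ 2 ≤ (μ Set.univ).toReal * ∫ x, w x ^ 2 ∂μ := by
  have hpq : Real.HolderConjugate 2 2 := by rw [Real.holderConjugate_iff]; norm_num
  have hone : MemLp (fun _ : α => (1:ℝ)) (ENNReal.ofReal 2) μ := memLp_const 1
  have h2' : MemLp w (ENNReal.ofReal 2) μ := by
    convert h2 using 2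
    simp [ENNReal.ofReal_ofNat]
  have H := integral_mul_le_Lp_mul_Lq_of_nonneg hpq hw
    (Filter.Eventually.of_forall fun _ => zero_le_one) h2' hone
  simp only [mul_one, one_rpow] at H
  have h1 : ∫ a, (1:ℝ) ∂μ = (μ Set.univ).toReal := by simp [measureReal_def]
  rw [h1] at H
  have hrw : ∫ a, w a ^ (2:ℝ) ∂μ = ∫ a, w a ^ 2 ∂μ := by
    refine integral_congr_ae ?_
    filter_upwards [hw] with x hx
    rw [← Real.rpow_natCast (w x) 2]; norm_num
  rw [hrw] at H
  have hI2 : 0 ≤ ∫ a, w a ^ 2 ∂μ := integral_nonneg fun x => sq_nonneg _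
  have hIw : 0 ≤ ∫ a, w a ∂μ := integral_nonneg_of_ae hw
  calc (∫ x, w x ∂μ)^2 ≤ ((∫ a, w a ^ 2 ∂μ) ^ (1/(2:ℝ)) * (μ Set.univ).toReal ^ (1/(2:ℝ)))^2 :=
        pow_le_pow_left₀ hIw H 2
    _ = (μ Set.univ).toReal * ∫ x, w x ^ 2 ∂μ := by
        rw [mul_pow, ← Real.rpow_natCast (_ ^ (1/(2:ℝ))) 2, ← Real.rpow_natCast (_ ^ (1/(2:ℝ))) 2,
          ← Real.rpow_mul hI2, ← Real.rpow_mul ENNReal.toReal_nonneg]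
        norm_num [mul_comm]

set_option maxHeartbeats 2000000 in
/-- Lemma 4.1 (second estimate): for the Heaviside kernel
`K₂(x,y) = H(y₁ - x₁) Y₂(x,y)` with `‖Y₂‖_{L∞} ≤ M`, there is
`C₁ = C₁(Ω,M) > 0` such that for all `λ > 0` and all `s ∈ L₂(Q_T)`,
`∫_{Q_T} (∫_{Ω₁} ∫_{x₁}^{b} Y₂(x₁,x̄,y₁,ȳ) s(y₁,ȳ,t) dy₁ dȳ)² φ_λ(x₁,t) dx dt
  ≤ C₁ ∫_{Q_T} s² φ_λ`. -/
theorem stmt_2 (m : ℕ) (a b T M : ℝ) (ha : 0 < a) (hab : a < b) (hT : 0 < T)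
    (hM : 0 < M) (A : Fin m → ℝ) (hA : ∀ i, 0 < A i)
    (Ω₁ : Set (EuclideanSpace ℝ (Fin m)))
    (hΩ₁ : Ω₁ = {y : EuclideanSpace ℝ (Fin m) | ∀ i, |y i| < A i})
    (Ω : Set (ℝ × EuclideanSpace ℝ (Fin m))) (hΩ : Ω = Set.Ioo a b ×ˢ Ω₁)
    (Y₂ : (ℝ × EuclideanSpace ℝ (Fin m)) → (ℝ × EuclideanSpace ℝ (Fin m)) → ℝ)
    (hY₂ : ∀ x ∈ Ω, ∀ y ∈ Ω, |Y₂ x y| ≤ M) :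
    ∃ C₁ > (0 : ℝ), ∀ lam > (0 : ℝ),
      ∀ s : (ℝ × EuclideanSpace ℝ (Fin m)) → ℝ → ℝ,
        MemLp (fun p : (ℝ × EuclideanSpace ℝ (Fin m)) × ℝ => s p.1 p.2) 2
          ((volume.restrict Ω).prod (volume.restrict (Set.Ioo 0 T))) →
        ∫ p : (ℝ × EuclideanSpace ℝ (Fin m)) × ℝ in Ω ×ˢ Set.Ioo 0 T,
            (∫ ybar in Ω₁, ∫ y₁ in p.1.1..b, Y₂ p.1 (y₁, ybar) * s (y₁, ybar) p.2) ^ 2 *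
              Real.exp (2 * lam * (p.1.1 ^ 2 - (p.2 - T / 2) ^ 2)) ≤
          C₁ * ∫ p : (ℝ × EuclideanSpace ℝ (Fin m)) × ℝ in Ω ×ˢ Set.Ioo 0 T,
              (s p.1 p.2) ^ 2 *
                Real.exp (2 * lam * (p.1.1 ^ 2 - (p.2 - T / 2) ^ 2)) := by
  classical
  -- basic facts about Ω₁ and Ω
  have hΩ₁open : IsOpen Ω₁ := by
    have h : Ω₁ = ⋂ i, (fun y : EuclideanSpace ℝ (Fin m) => |y i|) ⁻¹' Set.Iio (A i) := by
      rw [hΩ₁]; ext y; simp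
    rw [h]
    exact isOpen_iInter_of_finite fun i =>
      (isOpen_Iio).preimage ((EuclideanSpace.proj i).continuous.abs)
  have hΩ₁meas : MeasurableSet Ω₁ := hΩ₁open.measurableSet
  have hΩopen : IsOpen Ω := by rw [hΩ]; exact isOpen_Ioo.prod hΩ₁open
  have hΩmeas : MeasurableSet Ω := hΩopen.measurableSet
  have hΩ₁fin : volume Ω₁ < ⊤ := by
    refine Bornology.IsBounded.measure_lt_top ?_
    rw [Metric.isBounded_iff_subset_closedBall 0]
    refine ⟨Real.sqrt (∑ i, (A i)^2), fun y hy => ?_⟩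
    rw [hΩ₁] at hy
    simp only [Metric.mem_closedBall, dist_zero_right]
    rw [EuclideanSpace.norm_eq]
    refine Real.sqrt_le_sqrt (Finset.sum_le_sum fun i _ => ?_)
    have h0 : ‖y i‖ = |y i| := rfl
    rw [h0]
    exact pow_le_pow_left₀ (abs_nonneg _) (hy i).le 2
  have hΩfin : volume Ω < ⊤ := by
    rw [hΩ, Measure.volume_eq_prod, Measure.prod_prod]
    exact ENNReal.mul_lt_top measure_Ioo_lt_top hΩ₁fin
  have hΩpos : 0 < volume Ω := by
    refine hΩopen.measure_pos volume ⟨((a+b)/2, 0), ?_⟩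
    rw [hΩ]
    refine ⟨⟨by linarith, by linarith⟩, ?_⟩
    rw [hΩ₁]; intro i; simpa using hA i
  set V := (volume Ω).toReal with hVdef
  have hVpos : 0 < V := ENNReal.toReal_pos hΩpos.ne' hΩfin.ne
  refine ⟨M^2 * V^2, by positivity, ?_⟩
  intro lam hlam s hs
  set ρ₁ := (volume : Measure ℝ).restrict (Set.Ioo a b) with hρ₁
  set ρ₂ := (volume : Measure (EuclideanSpace ℝ (Fin m))).restrict Ω₁ with hρ₂
  set ρ₃ := (volume : Measure ℝ).restrict (Set.Ioo 0 T) with hρ₃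
  set ν := (volume : Measure (ℝ × EuclideanSpace ℝ (Fin m))).restrict Ω with hνdef
  set μ := ν.prod ρ₃ with hμdef
  haveI : IsFiniteMeasure ρ₂ := ⟨by rw [hρ₂, Measure.restrict_apply_univ]; exact hΩ₁fin⟩
  haveI : IsFiniteMeasure ρ₁ := ⟨by rw [hρ₁, Measure.restrict_apply_univ]; exact measure_Ioo_lt_top⟩
  haveI : IsFiniteMeasure ρ₃ := ⟨by rw [hρ₃, Measure.restrict_apply_univ]; exact measure_Ioo_lt_top⟩
  haveI : IsFiniteMeasure ν := ⟨by rw [hνdef, Measure.restrict_apply_univ]; exact hΩfin⟩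
  have hν : ν = ρ₁.prod ρ₂ := by
    rw [hνdef, hΩ, hρ₁, hρ₂, Measure.volume_eq_prod, Measure.prod_restrict]
  have hμvol : (volume : Measure ((ℝ × EuclideanSpace ℝ (Fin m)) × ℝ)).restrict
      (Ω ×ˢ Set.Ioo 0 T) = μ := by
    rw [hμdef, hνdef, hρ₃, Measure.volume_eq_prod, Measure.prod_restrict]
  rw [hμvol]
  -- the weight function
  set ψ : ℝ → ℝ → ℝ := fun y₁ t => Real.exp (lam * (y₁^2 - (t - T/2)^2)) with hψdef
  have hψsq : ∀ y₁ t : ℝ, Real.exp (2*lam*(y₁^2-(t-T/2)^2)) = ψ y₁ t ^ 2 := by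
    intro y₁ t
    simp only [hψdef]
    have h : 2*lam*(y₁^2-(t-T/2)^2) = lam*(y₁^2-(t-T/2)^2) + lam*(y₁^2-(t-T/2)^2) := by ring
    rw [h, Real.exp_add, ← sq]
  set q' : (ℝ × EuclideanSpace ℝ (Fin m)) × ℝ → ℝ :=
    fun p => s p.1 p.2 ^ 2 * Real.exp (2*lam*(p.1.1^2 - (p.2 - T/2)^2)) with hq'def
  have hq'nonneg : ∀ p, 0 ≤ q' p := fun p => by
    simp only [hq'def]; positivity
  -- a.e. membership facts
  have hfst : ∀ᵐ p ∂μ, p.1 ∈ Ω := by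
    rw [ae_iff]
    have h : {p : (ℝ × EuclideanSpace ℝ (Fin m)) × ℝ | ¬ p.1 ∈ Ω} = Ωᶜ ×ˢ Set.univ := by
      ext p; simp
    rw [h, hμdef, Measure.prod_prod, hνdef, Measure.restrict_apply hΩmeas.compl]
    simp
  -- integrability of q'
  have hsq : Integrable (fun p : (ℝ × EuclideanSpace ℝ (Fin m)) × ℝ => s p.1 p.2 ^ 2) μ :=
    hs.integrable_sq
  have hexp_cont : Continuous (fun p : (ℝ × EuclideanSpace ℝ (Fin m)) × ℝ =>
      Real.exp (2*lam*(p.1.1^2 - (p.2 - T/2)^2))) := by fun_prop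
  have hexp_bdd : ∀ᵐ p ∂μ, ‖Real.exp (2*lam*(p.1.1^2 - (p.2 - T/2)^2))‖
      ≤ Real.exp (2*lam*b^2) := by
    filter_upwards [hfst] with p hp
    rw [Real.norm_eq_abs, Real.abs_exp]
    apply Real.exp_le_exp.2
    rw [hΩ] at hp
    have h1 := hp.1
    have h2 : p.1.1^2 ≤ b^2 := by nlinarith [h1.1, h1.2, ha]
    nlinarith [mul_le_mul_of_nonneg_left h2 (le_of_lt hlam),
      mul_nonneg (le_of_lt hlam) (sq_nonneg (p.2 - T/2))]
  have hq'int : Integrable q' μ := by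
    have h := hsq.bdd_mul (c := Real.exp (2*lam*b^2)) hexp_cont.aestronglyMeasurable hexp_bdd
    exact h.congr (Filter.Eventually.of_forall fun p => by simp only [hq'def]; ring)
  have hGt_ae : ∀ᵐ t ∂ρ₃, Integrable (fun y => q' (y, t)) ν := hq'int.prod_left_ae
  set G : ℝ → ℝ := fun t => ∫ y, q' (y, t) ∂ν with hGdef
  have hGnonneg : ∀ t, 0 ≤ G t := fun t => integral_nonneg fun y => hq'nonneg _
  have hGint : Integrable G ρ₃ := by
    have h := hq'int.integral_norm_prod_right
    refine h.congr (Filter.Eventually.of_forall fun t => ?_)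
    simp only [hGdef]
    exact integral_congr_ae (Filter.Eventually.of_forall fun y =>
      Real.norm_of_nonneg (hq'nonneg _))
  -- lift good-t to the product
  have hGt_lift : ∀ᵐ p ∂μ, Integrable (fun y => q' (y, p.2)) ν := by
    rw [ae_iff] at hGt_ae ⊢
    have h : {p : (ℝ × EuclideanSpace ℝ (Fin m)) × ℝ | ¬ Integrable (fun y => q' (y, p.2)) ν}
        = Set.univ ×ˢ {t | ¬ Integrable (fun y => q' (y, t)) ν} := by
      ext p; simp
    rw [h, hμdef, Measure.prod_prod, hGt_ae, mul_zero]
  -- the key pointwise bound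
  have hkey : ∀ᵐ p ∂μ,
      (∫ ybar in Ω₁, ∫ y₁ in p.1.1..b, Y₂ p.1 (y₁, ybar) * s (y₁, ybar) p.2) ^ 2 *
        Real.exp (2 * lam * (p.1.1 ^ 2 - (p.2 - T / 2) ^ 2)) ≤ M^2 * V * G p.2 := by
    filter_upwards [hfst, hGt_lift] with p hpΩ hQ
    set x := p.1 with hxdef
    set t := p.2 with htdef
    have hx1 : x.1 ∈ Set.Ioo a b := by
      rw [hΩ] at hpΩ; exact hpΩ.1
    set c := ψ x.1 t with hcdef
    have hc : 0 < c := Real.exp_pos _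
    set w : ℝ × EuclideanSpace ℝ (Fin m) → ℝ := fun y => |s y t| * ψ y.1 t with hwdef
    have hqw : ∀ y : ℝ × EuclideanSpace ℝ (Fin m), q' (y, t) = w y ^ 2 := by
      intro y
      simp only [hq'def, hwdef]
      rw [mul_pow, sq_abs, ← hψsq]
    have hQ' : Integrable (fun y => w y ^ 2) ν :=
      hQ.congr (Filter.Eventually.of_forall fun y => hqw y)
    have hw_nonneg : ∀ y, 0 ≤ w y := fun y =>
      mul_nonneg (abs_nonneg _) (Real.exp_pos _).le
    have hw_meas : AEStronglyMeasurable w ν := by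
      have h : w = fun y => Real.sqrt (w y ^ 2) :=
        funext fun y => (Real.sqrt_sq (hw_nonneg y)).symm
      rw [h]
      exact Real.continuous_sqrt.comp_aestronglyMeasurable hQ'.aestronglyMeasurable
    have hw_int : Integrable w ν := by
      refine ((integrable_const (1:ℝ)).add hQ').mono' hw_meas
        (Filter.Eventually.of_forall fun y => ?_)
      rw [Real.norm_of_nonneg (hw_nonneg y)]
      show w y ≤ 1 + w y ^ 2
      nlinarith [hw_nonneg y, sq_nonneg (w y - 1)]
    have hw2 : MemLp w 2 ν := (memLp_two_iff_integrable_sq hw_meas).2 hQ'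
    have hCS : (∫ y, w y ∂ν)^2 ≤ V * G t := by
      have h := cs_helper (Filter.Eventually.of_forall hw_nonneg) hw2
      calc (∫ y, w y ∂ν)^2 ≤ (ν Set.univ).toReal * ∫ y, w y ^ 2 ∂ν := h
        _ = V * G t := by
            rw [hνdef, Measure.restrict_apply_univ]
            congr 1
            simp only [hGdef]
            exact integral_congr_ae (Filter.Eventually.of_forall fun y => (hqw y).symm)
    have hw_int' : Integrable w (ρ₁.prod ρ₂) := hν ▸ hw_int
    have hslice : ∀ᵐ ybar ∂ρ₂, Integrable (fun y₁ => w (y₁, ybar)) ρ₁ :=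
      hw_int'.prod_left_ae
    set J : EuclideanSpace ℝ (Fin m) → ℝ := fun ybar => ∫ y₁, w (y₁, ybar) ∂ρ₁ with hJdef
    have hJnn : ∀ ybar, 0 ≤ J ybar := fun _ => integral_nonneg fun _ => hw_nonneg _
    have hJint : Integrable J ρ₂ := by
      have h := hw_int'.integral_norm_prod_right
      refine h.congr (Filter.Eventually.of_forall fun ybar => ?_)
      simp only [hJdef]
      exact integral_congr_ae (Filter.Eventually.of_forall fun y₁ =>
        Real.norm_of_nonneg (hw_nonneg _))
    have hybar : ∀ᵐ ybar ∂ρ₂, ybar ∈ Ω₁ := by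
      rw [hρ₂]; exact ae_restrict_mem hΩ₁meas
    have hinner : ∀ᵐ ybar ∂ρ₂,
        ‖∫ y₁ in x.1..b, Y₂ x (y₁, ybar) * s (y₁, ybar) t‖ ≤ (M / c) * J ybar := by
      filter_upwards [hslice, hybar] with ybar hwy hyΩ
      rw [intervalIntegral.integral_of_le (le_of_lt hx1.2)]
      have hIocIoo : (volume : Measure ℝ).restrict (Set.Ioc x.1 b)
          = volume.restrict (Set.Ioo x.1 b) :=
        (Measure.restrict_congr_set Ioo_ae_eq_Ioc).symm
      have hwIoc : Integrable (fun y₁ => w (y₁, ybar))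
          ((volume : Measure ℝ).restrict (Set.Ioc x.1 b)) := by
        rw [hIocIoo]
        exact hwy.mono_measure
          (Measure.restrict_mono (Set.Ioo_subset_Ioo hx1.1.le le_rfl) le_rfl)
      have hbd : ∀ᵐ y₁ ∂(volume : Measure ℝ).restrict (Set.Ioc x.1 b),
          ‖Y₂ x (y₁, ybar) * s (y₁, ybar) t‖ ≤ (M / c) * w (y₁, ybar) := by
        rw [hIocIoo]
        filter_upwards [ae_restrict_mem measurableSet_Ioo] with y₁ hy₁
        have hyΩ' : (y₁, ybar) ∈ Ω := by
          rw [hΩ]; exact ⟨⟨lt_trans hx1.1 hy₁.1, hy₁.2⟩, hyΩ⟩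
        have hY := hY₂ x hpΩ (y₁, ybar) hyΩ'
        have hψle : c ≤ ψ y₁ t := by
          simp only [hcdef, hψdef]
          apply Real.exp_le_exp.2
          have h2 : x.1^2 ≤ y₁^2 := by nlinarith [hx1.1, ha, hy₁.1]
          nlinarith [hlam]
        rw [norm_mul, Real.norm_eq_abs, Real.norm_eq_abs]
        have hwv : w (y₁, ybar) = |s (y₁, ybar) t| * ψ y₁ t := rfl
        rw [hwv]
        calc |Y₂ x (y₁, ybar)| * |s (y₁, ybar) t| ≤ M * |s (y₁, ybar) t| :=
              mul_le_mul_of_nonneg_right hY (abs_nonneg _)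
          _ ≤ M / c * (|s (y₁, ybar) t| * ψ y₁ t) := by
              rw [div_mul_eq_mul_div, le_div_iff₀ hc]
              nlinarith [mul_le_mul_of_nonneg_left hψle
                (mul_nonneg hM.le (abs_nonneg (s (y₁, ybar) t)))]
      calc ‖∫ y₁ in Set.Ioc x.1 b, Y₂ x (y₁, ybar) * s (y₁, ybar) t‖
          ≤ ∫ y₁ in Set.Ioc x.1 b, ‖Y₂ x (y₁, ybar) * s (y₁, ybar) t‖ :=
            norm_integral_le_integral_norm _
        _ ≤ ∫ y₁ in Set.Ioc x.1 b, (M / c) * w (y₁, ybar) :=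
            integral_mono_of_nonneg (Filter.Eventually.of_forall fun _ => norm_nonneg _)
              (hwIoc.const_mul _) hbd
        _ = (M / c) * ∫ y₁ in Set.Ioc x.1 b, w (y₁, ybar) := integral_const_mul _ _
        _ ≤ (M / c) * J ybar := by
            refine mul_le_mul_of_nonneg_left ?_ (by positivity)
            simp only [hJdef, hρ₁]
            exact setIntegral_mono_set hwy
              (Filter.Eventually.of_forall fun _ => hw_nonneg _)
              ((Filter.EventuallyEq.le (Ioo_ae_eq_Ioc (a := x.1) (b := b)).symm).trans
                (Set.Ioo_subset_Ioo hx1.1.le le_rfl).eventuallyLE)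
    have hIJnn : 0 ≤ ∫ ybar, J ybar ∂ρ₂ := integral_nonneg hJnn
    have houter : ‖∫ ybar in Ω₁, ∫ y₁ in x.1..b, Y₂ x (y₁, ybar) * s (y₁, ybar) t‖
        ≤ (M / c) * ∫ ybar, J ybar ∂ρ₂ := by
      calc ‖∫ ybar in Ω₁, ∫ y₁ in x.1..b, Y₂ x (y₁, ybar) * s (y₁, ybar) t‖
          ≤ ∫ ybar in Ω₁, ‖∫ y₁ in x.1..b, Y₂ x (y₁, ybar) * s (y₁, ybar) t‖ :=
            norm_integral_le_integral_norm _
        _ ≤ ∫ ybar, (M / c) * J ybar ∂ρ₂ := by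
            rw [hρ₂] at hinner ⊢
            exact integral_mono_of_nonneg
              (Filter.Eventually.of_forall fun _ => norm_nonneg _)
              ((hρ₂ ▸ hJint).const_mul _) hinner
        _ = (M / c) * ∫ ybar, J ybar ∂ρ₂ := integral_const_mul _ _
    have hIJ : ∫ ybar, J ybar ∂ρ₂ = ∫ y, w y ∂ν := by
      rw [hν]
      have hu : Function.uncurry (fun y₁ ybar => w (y₁, ybar)) = w :=
        funext fun z => by cases z; rfl
      have hsw := integral_integral_swap (f := fun y₁ ybar => w (y₁, ybar))
        (μ := ρ₁) (ν := ρ₂) (by rw [hu]; exact hw_int')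
      calc ∫ ybar, J ybar ∂ρ₂ = ∫ y₁, ∫ ybar, w (y₁, ybar) ∂ρ₂ ∂ρ₁ := hsw.symm
        _ = ∫ y, w y ∂(ρ₁.prod ρ₂) := (integral_prod w hw_int').symm
    have h1 : (∫ ybar in Ω₁, ∫ y₁ in x.1..b, Y₂ x (y₁, ybar) * s (y₁, ybar) t)^2
        ≤ ((M / c) * ∫ ybar, J ybar ∂ρ₂)^2 := by
      rw [← sq_abs]
      exact pow_le_pow_left₀ (abs_nonneg _) houter 2
    rw [hψsq x.1 t]
    calc (∫ ybar in Ω₁, ∫ y₁ in x.1..b, Y₂ x (y₁, ybar) * s (y₁, ybar) t)^2 * ψ x.1 t ^ 2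
        ≤ ((M / c) * ∫ ybar, J ybar ∂ρ₂)^2 * c ^ 2 := by
          rw [← hcdef]
          exact mul_le_mul_of_nonneg_right h1 (sq_nonneg c)
      _ = M^2 * (∫ ybar, J ybar ∂ρ₂)^2 := by
          field_simp
      _ = M^2 * (∫ y, w y ∂ν)^2 := by rw [hIJ]
      _ ≤ M^2 * (V * G t) := mul_le_mul_of_nonneg_left hCS (by positivity)
      _ = M^2 * V * G t := by ring
  -- integrability of the dominating function
  have hGsnd : Integrable (fun p : (ℝ × EuclideanSpace ℝ (Fin m)) × ℝ => G p.2) μ := by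
    rw [hμdef]
    refine (integrable_prod_iff ?_).2 ⟨?_, ?_⟩
    · exact hGint.aestronglyMeasurable.comp_snd
    · exact Filter.Eventually.of_forall fun _ => hGint
    · exact integrable_const (∫ t, ‖G t‖ ∂ρ₃)
  have hdom : Integrable (fun p : (ℝ × EuclideanSpace ℝ (Fin m)) × ℝ => M^2 * V * G p.2) μ :=
    hGsnd.const_mul _
  have hLHS := integral_mono_of_nonneg
    (Filter.Eventually.of_forall fun p => by positivity) hdom hkey
  refine le_trans hLHS ?_
  show (∫ p, M^2 * V * G p.2 ∂μ) ≤ M^2 * V^2 * ∫ p, q' p ∂μ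
  have hstep1 : ∫ p, M^2 * V * G p.2 ∂μ = M^2 * V * ∫ p, G p.2 ∂μ :=
    integral_const_mul _ _
  have hstep2 : ∫ p, G p.2 ∂μ = V * ∫ t, G t ∂ρ₃ := by
    rw [hμdef, integral_prod _ (hμdef ▸ hGsnd)]
    have h : (fun y : ℝ × EuclideanSpace ℝ (Fin m) => ∫ t, G (y, t).2 ∂ρ₃)
        = fun _ => ∫ t, G t ∂ρ₃ := rfl
    rw [h, integral_const, smul_eq_mul, hνdef, measureReal_def, Measure.restrict_apply_univ]
  have hstep3 : ∫ t, G t ∂ρ₃ = ∫ p, q' p ∂μ := by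
    have hu : Function.uncurry (fun y t => q' (y, t)) = q' := funext fun z => by cases z; rfl
    have hsw := integral_integral_swap (f := fun y t => q' (y, t)) (μ := ν) (ν := ρ₃)
      (by rw [hu]; exact (hμdef ▸ hq'int))
    calc ∫ t, G t ∂ρ₃ = ∫ y, ∫ t, q' (y, t) ∂ρ₃ ∂ν := hsw.symm
      _ = ∫ p, q' p ∂μ := by rw [hμdef]; exact (integral_prod q' (hμdef ▸ hq'int)).symm
  calc ∫ p, M^2 * V * G p.2 ∂μ = M^2 * V * (V * ∫ t, G t ∂ρ₃) := by rw [hstep1, hstep2]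
    _ = M^2 * V^2 * ∫ p, q' p ∂μ := by rw [hstep3]; ring
    _ ≤ M^2 * V^2 * ∫ p, q' p ∂μ := le_rfl
end
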